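/- Let K be a cell over a finite set P, let Q be the set of ports of P that are flexible for K, and let flex(K) = { g ∩ Q | g ∈ K }, a cell over Q. Then flex(K) is a Kekulé cell over Q if and only if K is a Kekulé cell over P. -/

import Mathlib

/-!
A rigid port can be removed, and a rigid port can be added, without changing the rest of a
Kekulé cell. To remove a port `p` that is never (always) occupied, glue to `p` a one-port gadget
that always (never) occupies it: a pendant triangle (a pendant square). Then `p` is internal
and covered exactly once in every state. To add rigid ports, take the disjoint union with such
gadgets. Both constructions are gluings of two graphs along at most one common port, once
their internal nodes have been relabelled apart.
-/

open scoped symmDiff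

namespace Kekule

abbrev Node := ℕ
abbrev Graph := Finset (Finset Node)

/-- `G` is a graph: every edge is a 2-element set of nodes. -/
def IsGraph (G : Graph) : Prop := ∀ e ∈ G, e.card = 2

/-- The nodes of a graph: the elements of its edges. -/
def nodes (G : Graph) : Finset Node := G.biUnion id

/-- The number of edges of `G` containing `v`. -/
def deg (G : Graph) (v : Node) : ℕ := (G.filter (fun e => v ∈ e)).card

/-- A port is a node contained in exactly one edge. -/
def ports (G : Graph) : Finset Node := (nodes G).filter (fun v => deg G v = 1)

/-- An internal node is a node that is not a port. -/
def internal (G : Graph) : Finset Node := (nodes G).filter (fun v => deg G v ≠ 1)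

/-- A Kekulé state of `G`: a subgraph `W ⊆ G` such that every internal node
of `G` lies in exactly one edge of `W`. -/
def IsKekule (G W : Graph) : Prop := W ⊆ G ∧ ∀ v ∈ internal G, deg W v = 1

/-- A curve in `G`: a subgraph `C ⊆ G` such that every node of `C` that is
internal in `G` lies in exactly two edges of `C`. -/
def IsCurve (G C : Graph) : Prop :=
  C ⊆ G ∧ ∀ v ∈ nodes C, v ∈ internal G → deg C v = 2

/-- `(C, W)` is an alternating curve in `G`: both are subgraphs of `G`,
`C` is a curve in `G`, and `W ∩ C` is a Kekulé state of `C`. -/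
def IsAlternating (G C W : Graph) : Prop :=
  W ⊆ G ∧ IsCurve G C ∧ IsKekule C (W ∩ C)

/-- `W|P`: the set of ports in `P` that lie in some edge of `W`. -/
def rest (W : Graph) (P : Finset Node) : Finset Node := P ∩ nodes W

/-- The set of Kekulé port assignments of `G`. -/
def KP (G : Graph) : Set (Finset Node) :=
  {g | ∃ W, IsKekule G W ∧ rest W (ports G) = g}

/-- A cell `K` over `P` is a Kekulé cell if it is the set of Kekulé port
assignments of some graph with port set `P`. -/
def IsKekuleCell (P : Finset Node) (K : Set (Finset Node)) : Prop :=
  ∃ G, IsGraph G ∧ ports G = P ∧ KP G = K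

/-- A channel: a 2-element subset of `P`. -/
def IsChannel (P : Finset Node) (c : Finset Node) : Prop := c ⊆ P ∧ c.card = 2

/-- A port `p` is flexible for a cell `K`. -/
def Flexible (K : Set (Finset Node)) (p : Node) : Prop :=
  ∃ g ∈ K, ∃ g' ∈ K, p ∈ g ∧ p ∉ g'

/-- Hamming distance between two port assignments. -/
def hdist (k k' : Finset Node) : ℕ := (k ∆ k').card

/-- The Hamming diameter of `K` equals `n`. -/
def HamDiamEq (K : Set (Finset Node)) (n : ℕ) : Prop :=
  (∃ k ∈ K, ∃ k' ∈ K, hdist k k' = n) ∧ ∀ k ∈ K, ∀ k' ∈ K, hdist k k' ≤ n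

/-- `G` is connected: nonempty, and any two distinct nodes are joined by a walk. -/
def Connected (G : Graph) : Prop :=
  G.Nonempty ∧ ∀ p ∈ nodes G, ∀ q ∈ nodes G, p ≠ q →
    ∃ (n : ℕ) (f : ℕ → Node), f 0 = p ∧ f n = q ∧
      ∀ i < n, ({f i, f (i + 1)} : Finset Node) ∈ G

/-- `C` is a simple path between `p` and `q`. -/
def IsSimplePath (C : Graph) (p q : Node) : Prop :=
  Connected C ∧ ports C = {p, q} ∧
    ∀ v ∈ nodes C, v ≠ p → v ≠ q → deg C v = 2

/-- A cycle: a connected graph all of whose nodes lie in exactly two edges. -/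
def IsCycle (C : Graph) : Prop :=
  Connected C ∧ ∀ v ∈ nodes C, deg C v = 2

/-- A semi-Kekulé state of `G`: every internal node of `G` lies in an odd
number of edges of `W`. -/
def IsSemiKekule (G W : Graph) : Prop :=
  W ⊆ G ∧ ∀ v ∈ internal G, deg W v % 2 = 1

/-- The signature of `G`. -/
def sig (G : Graph) : ℕ := (internal G).card % 2

/-- `G` is omniconjugated. -/
def Omniconjugated (G : Graph) : Prop :=
  2 ≤ (ports G).card ∧ KP G = {g | g ⊆ ports G ∧ g.card % 2 = sig G}

instance : Std.Commutative (α := Finset Node) (· ∆ ·) := ⟨symmDiff_comm⟩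
instance : Std.Associative (α := Finset Node) (· ∆ ·) := ⟨symmDiff_assoc⟩

/-- The `⊕`-sum of a finite family of port assignments. -/
def xorSum (D : Finset (Finset Node)) : Finset Node := D.fold (· ∆ ·) ∅ id

lemma mem_nodes {G : Graph} {v : Node} : v ∈ nodes G ↔ ∃ e ∈ G, v ∈ e := by
  simp [nodes]

lemma mem_nodes_iff_deg_pos {G : Graph} {v : Node} : v ∈ nodes G ↔ 0 < deg G v := by
  simp [mem_nodes, deg, Finset.card_pos, Finset.Nonempty]

lemma mem_ports {G : Graph} {v : Node} : v ∈ ports G ↔ deg G v = 1 := by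
  rw [ports, Finset.mem_filter, mem_nodes_iff_deg_pos]
  omega

lemma mem_internal {G : Graph} {v : Node} : v ∈ internal G ↔ 0 < deg G v ∧ deg G v ≠ 1 := by
  rw [internal, Finset.mem_filter, mem_nodes_iff_deg_pos]

lemma ports_subset_nodes (G : Graph) : ports G ⊆ nodes G :=
  Finset.filter_subset _ _

lemma nodes_union (G H : Graph) : nodes (G ∪ H) = nodes G ∪ nodes H :=
  Finset.union_biUnion

lemma nodes_mono {W G : Graph} (h : W ⊆ G) : nodes W ⊆ nodes G :=
  Finset.biUnion_subset_biUnion_of_subset_left _ h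

lemma deg_mono {W G : Graph} (h : W ⊆ G) (v : Node) : deg W v ≤ deg G v :=
  Finset.card_le_card (Finset.filter_subset_filter _ h)

lemma deg_union {G H : Graph} (h : Disjoint G H) (v : Node) :
    deg (G ∪ H) v = deg G v + deg H v := by
  rw [deg, Finset.filter_union, Finset.card_union_of_disjoint (Finset.disjoint_filter_filter h)]
  rfl

lemma isGraph_union {G H : Graph} (hG : IsGraph G) (hH : IsGraph H) : IsGraph (G ∪ H) := by
  intro e he
  rcases Finset.mem_union.1 he with he | he
  exacts [hG e he, hH e he]

lemma mem_rest_ports_iff {W G : Graph} (hW : W ⊆ G) {v : Node} (hv : v ∈ ports G) :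
    v ∈ rest W (ports G) ↔ deg W v = 1 := by
  have := deg_mono hW v
  rw [mem_ports] at hv
  rw [rest, Finset.mem_inter, mem_nodes_iff_deg_pos, mem_ports]
  omega

lemma KP_eq_singleton {G W₀ : Graph} {s : Finset Node} (hW₀ : IsKekule G W₀)
    (hs : rest W₀ (ports G) = s)
    (huniq : ∀ W ∈ G.powerset, IsKekule G W → rest W (ports G) = s) : KP G = {s} := by
  ext k
  constructor
  · rintro ⟨W, hW, rfl⟩
    exact huniq W (Finset.mem_powerset.2 hW.1) hW
  · rintro rfl
    exact ⟨W₀, hW₀, hs⟩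

def relabel (f : Node → Node) (G : Graph) : Graph := G.image (Finset.image f)

section Relabel

variable {f : Node → Node}

lemma nodes_relabel (G : Graph) : nodes (relabel f G) = (nodes G).image f := by
  ext w
  simp only [mem_nodes, relabel, Finset.mem_image, exists_exists_and_eq_and]
  constructor
  · rintro ⟨e, he, v, hv, rfl⟩
    exact ⟨v, ⟨e, he, hv⟩, rfl⟩
  · rintro ⟨v, ⟨e, he, hv⟩, rfl⟩
    exact ⟨e, he, v, hv, rfl⟩

lemma exists_eq_of_deg_relabel_pos {G : Graph} {w : Node} (h : 0 < deg (relabel f G) w) :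
    ∃ v, f v = w := by
  rw [← mem_nodes_iff_deg_pos, nodes_relabel, Finset.mem_image] at h
  obtain ⟨v, -, hv⟩ := h
  exact ⟨v, hv⟩

variable (hf : Function.Injective f)
include hf

lemma deg_relabel (W : Graph) (v : Node) : deg (relabel f W) (f v) = deg W v := by
  rw [deg, relabel, Finset.filter_image,
    Finset.card_image_of_injective _ (Finset.image_injective hf)]
  simp only [hf.mem_finset_image, deg]

lemma ports_relabel (G : Graph) : ports (relabel f G) = (ports G).image f := by
  ext w
  constructor
  · intro hw
    rw [mem_ports] at hw
    obtain ⟨v, rfl⟩ := exists_eq_of_deg_relabel_pos (f := f) (G := G) (w := w) (by omega)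
    rw [deg_relabel hf] at hw
    exact Finset.mem_image_of_mem f (mem_ports.2 hw)
  · intro hw
    obtain ⟨v, hv, rfl⟩ := Finset.mem_image.1 hw
    rwa [mem_ports, deg_relabel hf, ← mem_ports]

lemma internal_relabel (G : Graph) : internal (relabel f G) = (internal G).image f := by
  ext w
  constructor
  · intro hw
    rw [mem_internal] at hw
    obtain ⟨v, rfl⟩ := exists_eq_of_deg_relabel_pos hw.1
    rw [deg_relabel hf] at hw
    exact Finset.mem_image_of_mem f (mem_internal.2 hw)
  · intro hw
    obtain ⟨v, hv, rfl⟩ := Finset.mem_image.1 hw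
    rwa [mem_internal, deg_relabel hf, ← mem_internal]

lemma isGraph_relabel {G : Graph} (hG : IsGraph G) : IsGraph (relabel f G) := by
  intro e' he'
  obtain ⟨e, he, rfl⟩ := Finset.mem_image.1 he'
  rw [Finset.card_image_of_injective _ hf]
  exact hG e he

lemma isKekule_relabel_iff (G W : Graph) :
    IsKekule (relabel f G) (relabel f W) ↔ IsKekule G W := by
  rw [IsKekule, IsKekule, relabel, relabel,
    Finset.image_subset_image_iff (Finset.image_injective hf), ← relabel, ← relabel,
    internal_relabel hf, Finset.forall_mem_image]
  simp only [deg_relabel hf]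

lemma rest_relabel (G W : Graph) :
    rest (relabel f W) (ports (relabel f G)) = (rest W (ports G)).image f := by
  rw [rest, rest, ports_relabel hf, nodes_relabel, Finset.image_inter _ _ hf]

lemma KP_relabel (G : Graph) : KP (relabel f G) = Finset.image f '' KP G := by
  ext k
  constructor
  · rintro ⟨W', hW', rfl⟩
    obtain ⟨W, -, rfl⟩ := Finset.subset_image_iff.1 hW'.1
    exact ⟨_, ⟨W, (isKekule_relabel_iff hf G W).1 hW', rfl⟩, (rest_relabel hf G W).symm⟩
  · rintro ⟨_, ⟨W, hW, rfl⟩, rfl⟩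
    exact ⟨relabel f W, (isKekule_relabel_iff hf G W).2 hW, rest_relabel hf G W⟩

lemma IsKekuleCell.image {P : Finset Node} {K : Set (Finset Node)} (h : IsKekuleCell P K) :
    IsKekuleCell (P.image f) (Finset.image f '' K) := by
  obtain ⟨G, hG, rfl, rfl⟩ := h
  exact ⟨relabel f G, isGraph_relabel hf hG, ports_relabel hf G, KP_relabel hf G⟩

end Relabel

lemma injective_ite_add {P : Finset ℕ} {M : ℕ} (hM : ∀ v ∈ P, v ≤ M) :
    Function.Injective fun v => if v ∈ P then v else M + 1 + v := by
  intro a b hab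
  dsimp only at hab
  split_ifs at hab with ha hb hb
  · exact hab
  · have := hM a ha; omega
  · have := hM b hb; omega
  · omega

lemma IsKekuleCell.exists_avoiding {P : Finset Node} {K : Set (Finset Node)}
    (h : IsKekuleCell P K) (X : Finset Node) :
    ∃ G, IsGraph G ∧ ports G = P ∧ KP G = K ∧ nodes G ∩ X ⊆ P := by
  obtain ⟨G, hG, rfl, rfl⟩ := h
  obtain ⟨M, hM⟩ : ∃ M : ℕ, ∀ v ∈ X ∪ nodes G, v ≤ M :=
    ⟨_, fun v hv => Finset.le_sup (f := id) hv⟩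
  set f : ℕ → ℕ := fun v => if v ∈ ports G then v else M + 1 + v
  have hf : Function.Injective f := injective_ite_add fun v hv =>
    hM v (Finset.mem_union_right _ (ports_subset_nodes G hv))
  have hfix : ∀ s ⊆ ports G, s.image f = s := fun s hs =>
    (Finset.image_congr fun v hv => if_pos (hs hv)).trans Finset.image_id
  refine ⟨relabel f G, isGraph_relabel hf hG, ?_, ?_, ?_⟩
  · rw [ports_relabel hf, hfix _ subset_rfl]
  · rw [KP_relabel hf]
    refine Set.EqOn.image_eq_self fun g hg => hfix g ?_
    obtain ⟨W, -, rfl⟩ := hg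
    exact Finset.inter_subset_left
  · intro w hw
    rw [Finset.mem_inter, nodes_relabel, Finset.mem_image] at hw
    obtain ⟨⟨v, hv, rfl⟩, hX⟩ := hw
    by_cases hvP : v ∈ ports G
    · simp [f, hvP]
    · have := hM _ (Finset.mem_union_left _ hX)
      simp only [f, hvP, if_false] at this
      exact absurd this (Nat.not_le.2 (Nat.lt_add_right v M.lt_succ_self))

section Union

variable {G H : Graph}

lemma ports_union (hGH : Disjoint G H) :
    ports (G ∪ H) = (ports G ∪ ports H) \ (nodes G ∩ nodes H) := by
  ext v
  simp only [Finset.mem_sdiff, Finset.mem_union, Finset.mem_inter, mem_ports,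
    mem_nodes_iff_deg_pos, deg_union hGH]
  omega

lemma deg_eq_deg_inter_add (hGH : Disjoint G H) {W : Graph} (hW : W ⊆ G ∪ H) (v : Node) :
    deg W v = deg (W ∩ G) v + deg (W ∩ H) v := by
  conv_lhs => rw [← Finset.inter_eq_left.2 hW, Finset.inter_union_distrib_left]
  exact deg_union (Finset.disjoint_of_subset_left Finset.inter_subset_right
    (Finset.disjoint_of_subset_right Finset.inter_subset_right hGH)) v

lemma deg_eq_one_of_shared (hS : nodes G ∩ nodes H = ports G ∩ ports H) {v : Node}
    (hG : 0 < deg G v) (hH : 0 < deg H v) : deg G v = 1 ∧ deg H v = 1 := by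
  have : v ∈ nodes G ∩ nodes H :=
    Finset.mem_inter.2 ⟨mem_nodes_iff_deg_pos.2 hG, mem_nodes_iff_deg_pos.2 hH⟩
  rw [hS, Finset.mem_inter, mem_ports, mem_ports] at this
  exact this

variable (hGH : Disjoint G H) (hS : nodes G ∩ nodes H = ports G ∩ ports H)
include hGH hS

lemma isKekule_union_iff {W : Graph} (hW : W ⊆ G ∪ H) :
    IsKekule (G ∪ H) W ↔ IsKekule G (W ∩ G) ∧ IsKekule H (W ∩ H) ∧
      ∀ v ∈ ports G ∩ ports H, deg (W ∩ G) v + deg (W ∩ H) v = 1 := by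
  have key : ∀ v, deg (G ∪ H) v = deg G v + deg H v ∧
      deg W v = deg (W ∩ G) v + deg (W ∩ H) v ∧
      deg (W ∩ G) v ≤ deg G v ∧ deg (W ∩ H) v ≤ deg H v ∧
      (0 < deg G v → 0 < deg H v → deg G v = 1 ∧ deg H v = 1) := fun v =>
    ⟨deg_union hGH v, deg_eq_deg_inter_add hGH hW v, deg_mono Finset.inter_subset_right v,
      deg_mono Finset.inter_subset_right v, deg_eq_one_of_shared hS⟩
  simp only [IsKekule, mem_internal, Finset.mem_inter, mem_ports, Finset.inter_subset_right,
    true_and, hW]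
  constructor
  · intro h
    refine ⟨fun v hv => ?_, fun v hv => ?_, fun v hv => ?_⟩ <;>
      have := h v <;> have := key v <;> omega
  · rintro ⟨hG, hH, hshared⟩ v hv
    have := hG v
    have := hH v
    have := hshared v
    have := key v
    omega

lemma rest_union {Wg Wh : Graph} (hWg : Wg ⊆ G) (hWh : Wh ⊆ H) :
    rest (Wg ∪ Wh) (ports (G ∪ H)) =
      (rest Wg (ports G) ∪ rest Wh (ports H)) \ (ports G ∩ ports H) := by
  rw [ports_union hGH, hS]
  ext v
  have hg := @nodes_mono _ _ hWg v
  have hh := @nodes_mono _ _ hWh v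
  have hpg := @ports_subset_nodes G v
  have hph := @ports_subset_nodes H v
  have hshared := Finset.ext_iff.1 hS v
  simp only [rest, nodes_union, Finset.mem_inter, Finset.mem_union, Finset.mem_sdiff] at *
  tauto

lemma KP_union : KP (G ∪ H) = {k | ∃ g ∈ KP G, ∃ h ∈ KP H,
    (∀ v ∈ ports G ∩ ports H, v ∈ g ↔ v ∉ h) ∧ (g ∪ h) \ (ports G ∩ ports H) = k} := by
  ext k
  constructor
  · rintro ⟨W, hW, rfl⟩
    obtain ⟨hWG, hWH, hshared⟩ := (isKekule_union_iff hGH hS hW.1).1 hW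
    refine ⟨_, ⟨_, hWG, rfl⟩, _, ⟨_, hWH, rfl⟩, fun v hv => ?_, ?_⟩
    · rw [Finset.mem_inter] at hv
      rw [mem_rest_ports_iff Finset.inter_subset_right hv.1,
        mem_rest_ports_iff Finset.inter_subset_right hv.2]
      have := hshared v (Finset.mem_inter.2 hv)
      omega
    · rw [← rest_union hGH hS Finset.inter_subset_right Finset.inter_subset_right,
        ← Finset.inter_union_distrib_left, Finset.inter_eq_left.2 hW.1]
  · rintro ⟨_, ⟨Wg, hWg, rfl⟩, _, ⟨Wh, hWh, rfl⟩, hxor, rfl⟩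
    have hWgH : Disjoint Wg H := Finset.disjoint_of_subset_left hWg.1 hGH
    have hWhG : Disjoint Wh G := Finset.disjoint_of_subset_left hWh.1 hGH.symm
    have hg : (Wg ∪ Wh) ∩ G = Wg := by
      rw [Finset.union_inter_distrib_right, Finset.inter_eq_left.2 hWg.1,
        Finset.disjoint_iff_inter_eq_empty.1 hWhG, Finset.union_empty]
    have hh : (Wg ∪ Wh) ∩ H = Wh := by
      rw [Finset.union_inter_distrib_right, Finset.inter_eq_left.2 hWh.1,
        Finset.disjoint_iff_inter_eq_empty.1 hWgH, Finset.empty_union]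
    refine ⟨Wg ∪ Wh, (isKekule_union_iff hGH hS (Finset.union_subset_union hWg.1 hWh.1)).2
      ⟨by rwa [hg], by rwa [hh], fun v hv => ?_⟩, rest_union hGH hS hWg.1 hWh.1⟩
    rw [hg, hh]
    have hv' := Finset.mem_inter.1 hv
    have := hxor v hv
    rw [mem_rest_ports_iff hWg.1 hv'.1, mem_rest_ports_iff hWh.1 hv'.2] at this
    have := deg_mono hWg.1 v
    have := deg_mono hWh.1 v
    simp only [mem_ports] at hv'
    omega

end Union

-- Along two common ports the union could need a double edge.
theorem IsKekuleCell.glue {P P' : Finset Node} {K K' : Set (Finset Node)}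
    (h : IsKekuleCell P K) (h' : IsKekuleCell P' K') (hPP' : (P ∩ P').card ≤ 1) :
    IsKekuleCell ((P ∪ P') \ (P ∩ P')) {k | ∃ g ∈ K, ∃ g' ∈ K',
      (∀ v ∈ P ∩ P', v ∈ g ↔ v ∉ g') ∧ (g ∪ g') \ (P ∩ P') = k} := by
  obtain ⟨G, hG, rfl, rfl, hGP'⟩ := h.exists_avoiding P'
  obtain ⟨H, hH, rfl, rfl, hHG⟩ := h'.exists_avoiding (nodes G)
  have hS : nodes G ∩ nodes H = ports G ∩ ports H := by
    refine subset_antisymm (fun v hv => ?_)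
      (Finset.inter_subset_inter (ports_subset_nodes G) (ports_subset_nodes H))
    rw [Finset.mem_inter] at hv ⊢
    have hvH := hHG (Finset.mem_inter.2 ⟨hv.2, hv.1⟩)
    exact ⟨hGP' (Finset.mem_inter.2 ⟨hv.1, hvH⟩), hvH⟩
  have hGH : Disjoint G H := by
    refine Finset.disjoint_left.2 fun e heG heH => ?_
    have hsub : e ⊆ nodes G ∩ nodes H := fun v hv =>
      Finset.mem_inter.2 ⟨mem_nodes.2 ⟨e, heG, hv⟩, mem_nodes.2 ⟨e, heH, hv⟩⟩
    have := Finset.card_le_card hsub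
    rw [hS, hG e heG] at this
    omega
  exact ⟨G ∪ H, isGraph_union hG hH, by rw [ports_union hGH, hS], KP_union hGH hS⟩

theorem IsKekuleCell.union {P P' : Finset Node} {K K' : Set (Finset Node)}
    (h : IsKekuleCell P K) (h' : IsKekuleCell P' K') (hPP' : Disjoint P P') :
    IsKekuleCell (P ∪ P') (Set.image2 (· ∪ ·) K K') := by
  have hglue := h.glue h' (by rw [Finset.disjoint_iff_inter_eq_empty.1 hPP']; simp)
  rw [Finset.disjoint_iff_inter_eq_empty.1 hPP', Finset.sdiff_empty] at hglue
  convert hglue using 1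
  ext k
  simp [Set.mem_image2]

def pendantTriangle : Graph := {{0, 1}, {1, 2}, {1, 3}, {2, 3}}

def pendantSquare : Graph := {{0, 1}, {1, 2}, {2, 3}, {3, 4}, {4, 1}}

lemma isKekuleCell_pendantTriangle : IsKekuleCell {0} {{0}} :=
  ⟨pendantTriangle, by unfold IsGraph; decide, by decide,
    KP_eq_singleton (W₀ := {{0, 1}, {2, 3}}) (by unfold IsKekule; decide) (by decide)
      (by unfold IsKekule; decide)⟩

lemma isKekuleCell_pendantSquare : IsKekuleCell {0} {∅} :=
  ⟨pendantSquare, by unfold IsGraph; decide, by decide,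
    KP_eq_singleton (W₀ := {{1, 2}, {3, 4}}) (by unfold IsKekule; decide) (by decide)
      (by unfold IsKekule; decide)⟩

lemma isKekuleCell_empty : IsKekuleCell ∅ {∅} :=
  ⟨∅, by unfold IsGraph; decide, by decide,
    KP_eq_singleton (W₀ := ∅) (by unfold IsKekule; decide) (by decide)
      (by unfold IsKekule; decide)⟩

lemma isKekuleCell_one_port {p : Node} {s : Finset Node} (hs : s ⊆ {p}) :
    IsKekuleCell {p} {s} := by
  have hswap := (Equiv.swap 0 p).injective
  rcases Finset.subset_singleton_iff.1 hs with rfl | rfl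
  · simpa using isKekuleCell_pendantSquare.image hswap
  · simpa using isKekuleCell_pendantTriangle.image hswap

lemma isKekuleCell_singleton {S A : Finset Node} (hA : A ⊆ S) : IsKekuleCell S {A} := by
  induction S using Finset.induction_on generalizing A with
  | empty =>
    rw [Finset.subset_empty.1 hA]
    exact isKekuleCell_empty
  | @insert a S ha ih =>
    have hcell := (isKekuleCell_one_port (Finset.inter_subset_right (s₁ := A))).union
      (ih (A := A.erase a) fun v hv => ?_) (Finset.disjoint_singleton_left.2 ha)
    · rw [Set.image2_singleton, ← Finset.insert_eq] at hcell
      convert hcell using 2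
      ext v
      by_cases hv : v = a <;> simp [hv]
    · obtain ⟨hva, hvA⟩ := Finset.mem_erase.1 hv
      exact (Finset.mem_insert.1 (hA hvA)).resolve_left hva

theorem IsKekuleCell.erase {P : Finset Node} {K : Set (Finset Node)} (h : IsKekuleCell P K)
    {p : Node} (hp : p ∈ P) (hrigid : ¬ Flexible K p) :
    IsKekuleCell (P.erase p) ((·.erase p) '' K) := by
  obtain ⟨s, hs, hxor⟩ : ∃ s : Finset Node, s ⊆ {p} ∧ ∀ g ∈ K, p ∈ g ↔ p ∉ s := by
    by_cases hK : ∃ g ∈ K, p ∈ g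
    · obtain ⟨g', hg', hpg'⟩ := hK
      refine ⟨∅, Finset.empty_subset _, fun g hg => ⟨fun _ => Finset.notMem_empty p, fun _ => ?_⟩⟩
      by_contra hpg
      exact hrigid ⟨g', hg', g, hg, hpg', hpg⟩
    · refine ⟨{p}, subset_rfl, fun g hg => ⟨fun hpg => absurd ⟨g, hg, hpg⟩ hK, fun h => ?_⟩⟩
      exact absurd (Finset.mem_singleton_self p) h
  have hPp : P ∩ {p} = {p} := Finset.inter_singleton_of_mem hp
  have hglue := h.glue (isKekuleCell_one_port hs) (by rw [hPp]; rfl)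
  rw [hPp, Finset.union_sdiff_right, ← Finset.erase_eq] at hglue
  convert hglue using 1
  ext k
  simp only [Set.mem_image, Set.mem_ofPred_eq, Set.mem_singleton_iff, exists_eq_left,
    Finset.mem_singleton, forall_eq]
  refine exists_congr fun g => and_congr_right fun hg => ?_
  rw [and_iff_right (hxor g hg), Finset.union_sdiff_distrib,
    Finset.sdiff_eq_empty_iff_subset.2 hs, Finset.union_empty, Finset.erase_eq]

lemma IsKekuleCell.sdiff {P S : Finset Node} {K : Set (Finset Node)} (h : IsKekuleCell P K)
    (hSP : S ⊆ P) (hrigid : ∀ p ∈ S, ¬ Flexible K p) :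
    IsKekuleCell (P \ S) ((· \ S) '' K) := by
  induction S using Finset.induction_on with
  | empty => simpa using h
  | @insert a S ha ih =>
    have hS := ih ((Finset.subset_insert a S).trans hSP) fun p hp =>
      hrigid p (Finset.mem_insert_of_mem hp)
    have hrigid' : ¬ Flexible ((· \ S) '' K) a := by
      rintro ⟨_, ⟨g, hg, rfl⟩, _, ⟨g', hg', rfl⟩, hag, hag'⟩
      exact hrigid a (Finset.mem_insert_self a S)
        ⟨g, hg, g', hg', (Finset.mem_sdiff.1 hag).1, fun h => hag' (Finset.mem_sdiff.2 ⟨h, ha⟩)⟩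
    have hcell := hS.erase (Finset.mem_sdiff.2 ⟨hSP (Finset.mem_insert_self a S), ha⟩) hrigid'
    rw [Set.image_image] at hcell
    simpa only [← Finset.sdiff_insert] using hcell

open Classical in
lemma inter_union_filter_eq {P Q : Finset Node} {K : Set (Finset Node)}
    (hKP : ∀ k ∈ K, k ⊆ P) (hrigid : ∀ p ∈ P \ Q, ¬ Flexible K p) {g : Finset Node}
    (hg : g ∈ K) : g ∩ Q ∪ (P \ Q).filter (fun p => ∃ g ∈ K, p ∈ g) = g := by
  ext v
  simp only [Finset.mem_union, Finset.mem_inter, Finset.mem_filter]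
  constructor
  · rintro (⟨hvg, -⟩ | ⟨hvPQ, g', hg', hvg'⟩)
    · exact hvg
    · by_contra hvg
      exact hrigid v hvPQ ⟨g', hg', g, hg, hvg', hvg⟩
  · intro hvg
    by_cases hvQ : v ∈ Q
    · exact Or.inl ⟨hvg, hvQ⟩
    · exact Or.inr ⟨Finset.mem_sdiff.2 ⟨hKP g hg hvg, hvQ⟩, g, hg, hvg⟩

/-- `flex(K)` is a Kekulé cell over the set `Q` of flexible ports
if and only if `K` is a Kekulé cell over `P`. -/
theorem statement7 (P : Finset Node) (K : Set (Finset Node))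
    (hKP : ∀ k ∈ K, k ⊆ P)
    (Q : Finset Node) (hQ : ∀ p, p ∈ Q ↔ p ∈ P ∧ Flexible K p) :
    IsKekuleCell Q ((fun g => g ∩ Q) '' K) ↔ IsKekuleCell P K := by
  classical
  have hQP : Q ⊆ P := fun q hq => ((hQ q).1 hq).1
  have hrigid : ∀ p ∈ P \ Q, ¬ Flexible K p := fun p hp hflex =>
    (Finset.mem_sdiff.1 hp).2 ((hQ p).2 ⟨(Finset.mem_sdiff.1 hp).1, hflex⟩)
  constructor
  · intro hflex
    have hcell := hflex.union
      (isKekuleCell_singleton (Finset.filter_subset (fun p => ∃ g ∈ K, p ∈ g) (P \ Q)))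
      Finset.disjoint_sdiff
    rwa [Finset.union_sdiff_of_subset hQP, Set.image2_singleton_right, Set.image_image,
      Set.image_congr fun g hg => inter_union_filter_eq hKP hrigid hg, Set.image_id'] at hcell
  · intro hK
    have hcell := hK.sdiff Finset.sdiff_subset hrigid
    rwa [Finset.sdiff_sdiff_eq_self hQP, Set.image_congr fun g hg => ?_] at hcell
    ext v
    have := @hKP g hg v
    simp only [Finset.mem_sdiff, Finset.mem_inter]
    tauto

end Kekule
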